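/- Let (E,V) be a generated pair on a curve C of compact type with restriction maps ρᵢ : H⁰(C,E) → H⁰(Cᵢ,Eᵢ). There is a short exact sequence of sheaves on Cᵢ: 0 → ker(ρᵢ|_V) ⊗ O_{Cᵢ} → M_{E,V}|_{Cᵢ} → M_{Eᵢ,Vᵢ} → 0. -/
import Mathlib


open TensorProduct

/-- Let `(E,V)` be a generated pair on a curve of compact type, with
restriction `ρᵢ : H⁰(C,E) → H⁰(Cᵢ,Eᵢ)`.  Working over `R` (the structure sheaf of `Cᵢ`,
modelled as a `ℂ`-algebra), let `q = ρᵢ|_V : V → Vᵢ` (surjective onto `Vᵢ = ρᵢ(V)`), and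
let `evI : Vᵢ ⊗ O_{Cᵢ} → Eᵢ` be the (surjective) evaluation, so that the evaluation
`V ⊗ O_{Cᵢ} → Eᵢ` is `ε = evI ∘ (q ⊗ id)`; its kernel is `M_{E,V}|_{Cᵢ}` and the kernel
of `evI` is `M_{Eᵢ,Vᵢ}`.  Then there is a short exact sequence
`0 → ker(ρᵢ|_V) ⊗ O_{Cᵢ} → M_{E,V}|_{Cᵢ} → M_{Eᵢ,Vᵢ} → 0`: the canonical map
`ker q ⊗ R → V ⊗ R` is injective, its range is exactly the part of `M_{E,V}|_{Cᵢ}`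
killed by `q ⊗ id`, and `q ⊗ id` maps `M_{E,V}|_{Cᵢ}` onto `M_{Eᵢ,Vᵢ}`. -/
theorem syzygy_restriction_exact_sequence
    (R : Type*) [CommRing R] [Algebra ℂ R]            -- O_{Cᵢ}
    (V Vi : Type*) [AddCommGroup V] [Module ℂ V] [AddCommGroup Vi] [Module ℂ Vi]
    (Ei : Type*) [AddCommGroup Ei] [Module R Ei]
    (q : V →ₗ[ℂ] Vi) (hq : Function.Surjective q)     -- ρᵢ|_V, onto Vᵢ = ρᵢ(V)
    (evI : R ⊗[ℂ] Vi →ₗ[R] Ei) (hevI : Function.Surjective evI)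
    (hev : Function.Surjective (evI ∘ₗ q.baseChange R)) :
    Function.Injective ((LinearMap.ker q).subtype.baseChange R)
      ∧ LinearMap.range ((LinearMap.ker q).subtype.baseChange R)
          = LinearMap.ker (evI ∘ₗ q.baseChange R) ⊓ LinearMap.ker (q.baseChange R)
      ∧ Submodule.map (q.baseChange R) (LinearMap.ker (evI ∘ₗ q.baseChange R))
          = LinearMap.ker evI := by
  have hflat : Module.Flat ℂ R := inferInstance
  refine ⟨?_, ?_, ?_⟩
  · rw [LinearMap.baseChange_eq_ltensor]
    exact Module.Flat.lTensor_preserves_injective_linearMap _ (Submodule.injective_subtype _)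
  · have hex : Function.Exact ((LinearMap.ker q).subtype) q := by
      rw [LinearMap.exact_iff, Submodule.range_subtype]
    have hex2 := Module.Flat.lTensor_exact (N := LinearMap.ker q) (N' := V) (N'' := Vi) R hex
    have h1 : LinearMap.range ((LinearMap.ker q).subtype.baseChange R)
        = LinearMap.ker (q.baseChange R) := by
      have hthis := LinearMap.exact_iff.mp hex2
      have e1 : ⇑((LinearMap.ker q).subtype.baseChange R)
          = ⇑(LinearMap.lTensor R (LinearMap.ker q).subtype) :=
        LinearMap.baseChange_eq_ltensor _
      have e2 : ⇑(q.baseChange R) = ⇑(LinearMap.lTensor R q) :=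
        LinearMap.baseChange_eq_ltensor _
      ext x
      rw [LinearMap.mem_range, LinearMap.mem_ker, e1, e2]
      rw [← LinearMap.mem_ker, hthis, LinearMap.mem_range]
    have h2 : LinearMap.ker (q.baseChange R) ≤ LinearMap.ker (evI ∘ₗ q.baseChange R) :=
      LinearMap.ker_le_ker_comp _ _
    rw [h1, inf_eq_right.mpr h2]
  · have hsurj : Function.Surjective (q.baseChange R) := by
      rw [LinearMap.baseChange_eq_ltensor]
      exact LinearMap.lTensor_surjective _ hq
    rw [LinearMap.ker_comp, Submodule.map_comap_eq, LinearMap.range_eq_top.mpr hsurj,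
      top_inf_eq]
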